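/- arXiv:1306.5852 — 3 statements merged into one kernel-verified Lean document; each statement's English description precedes it below -/
import Mathlib

section
/- Let X be a compact topological space and let A ⊆ C(X, ℝ) be a bounded set of continuous functions. If A is relatively compact in the weak topology of the Banach space C(X,ℝ), then for any sequences f_n ∈ A and x_m ∈ X, the iterated limits lim_n lim_m f_n(x_m) and lim_m lim_n f_n(x_m) are equal whenever both exist. -/
/-!
Let `x₀` be a cluster point of `(x m)` in `X` and `g` a weak cluster point of `(f n)`, which
exists by weak relative compactness of `A`. Evaluation at a point is a weakly continuous linear
functional, so `g x₀` is a cluster point of `(f n x₀)` and each `g (x m)` is a cluster point of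
`(f n (x m))`. Continuity of `f n` gives `f n x₀ = lim_m f n (x m)`, hence `g x₀ = ℓ₁`;
continuity of `g` gives `g x₀ = ℓ₂` in the same way, with the roles of the two sequences swapped.
-/

open Filter Topology

lemma exists_mapClusterPt_of_isCompact_closure {α ι : Type*} [TopologicalSpace α] {s : Set α}
    (hs : IsCompact (closure s)) {l : Filter ι} [NeBot l] {u : ι → α} (hu : ∀ i, u i ∈ s) :
    ∃ a, MapClusterPt a l u :=
  let ⟨a, _, ha⟩ := hs.exists_mapClusterPt_of_frequently
    (Frequently.of_forall fun i => subset_closure (hu i))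
  ⟨a, ha⟩

lemma MapClusterPt.eq_of_tendsto {α β : Type*} [TopologicalSpace α] [T2Space α] {l : Filter β}
    {u : β → α} {a b : α} (hb : MapClusterPt b l u) (ha : Tendsto u l (𝓝 a)) : b = a :=
  eq_of_nhds_neBot (hb.clusterPt.mono ha)

lemma MapClusterPt.eq_iterated_limit {α β : Type*} [TopologicalSpace α] [TopologicalSpace β]
    [T2Space β] {u : ℕ → α} {a : α} (ha : MapClusterPt a atTop u) {F : ℕ → α → β}
    (hF : ∀ n, ContinuousAt (F n) a) {L : ℕ → β} {ℓ c : β}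
    (hL : ∀ n, Tendsto (fun m => F n (u m)) atTop (𝓝 (L n))) (hℓ : Tendsto L atTop (𝓝 ℓ))
    (hc : MapClusterPt c atTop fun n => F n a) : c = ℓ := by
  have hFL : (fun n => F n a) = L :=
    funext fun n => (ha.continuousAt_comp (hF n)).eq_of_tendsto (hL n)
  rw [hFL] at hc
  exact hc.eq_of_tendsto hℓ

lemma WeakSpace.continuous_continuousMap_eval {X : Type*} [TopologicalSpace X]
    [CompactSpace X] (y : X) :
    Continuous fun g : WeakSpace ℝ C(X, ℝ) => (show C(X, ℝ) from g) y :=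
  WeakBilin.eval_continuous _ (ContinuousMap.evalCLM ℝ y)

theorem stmt_4_general {X : Type*} [TopologicalSpace X] [CompactSpace X]
    (A : Set C(X, ℝ))
    (hcpt : IsCompact (@closure (WeakSpace ℝ C(X, ℝ)) _ (A : Set (WeakSpace ℝ C(X, ℝ)))))
    (f : ℕ → C(X, ℝ)) (hf : ∀ n, f n ∈ A) (x : ℕ → X)
    (L K : ℕ → ℝ) (ℓ₁ ℓ₂ : ℝ)
    (hL : ∀ n, Tendsto (fun m => f n (x m)) atTop (nhds (L n)))
    (hℓ₁ : Tendsto L atTop (nhds ℓ₁))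
    (hK : ∀ m, Tendsto (fun n => f n (x m)) atTop (nhds (K m)))
    (hℓ₂ : Tendsto K atTop (nhds ℓ₂)) :
    ℓ₁ = ℓ₂ := by
  obtain ⟨x₀, hx₀⟩ : ∃ x₀, MapClusterPt x₀ atTop x := exists_clusterPt_of_compactSpace _
  obtain ⟨g, hg⟩ : ∃ g : WeakSpace ℝ C(X, ℝ), MapClusterPt g atTop f :=
    exists_mapClusterPt_of_isCompact_closure hcpt hf
  let g' : C(X, ℝ) := g
  have hg_eval (y : X) : MapClusterPt (g' y) atTop fun n => f n y :=
    hg.continuousAt_comp (WeakSpace.continuous_continuousMap_eval y).continuousAt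
  have hgx₀_eq_ℓ₁ : g' x₀ = ℓ₁ :=
    MapClusterPt.eq_iterated_limit hx₀ (fun n => (f n).continuous.continuousAt) hL hℓ₁
      (hg_eval x₀)
  have hgx₀_eq_ℓ₂ : g' x₀ = ℓ₂ :=
    MapClusterPt.eq_iterated_limit hg
      (fun m => (WeakSpace.continuous_continuousMap_eval (x m)).continuousAt) hK hℓ₂
      (hx₀.continuousAt_comp g'.continuous.continuousAt)
  rw [← hgx₀_eq_ℓ₁, hgx₀_eq_ℓ₂]

/-- If a bounded set `A ⊆ C(X,ℝ)` (X compact Hausdorff) is relatively compact in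
the weak topology, then iterated double limits along sequences from `A` and `X`
agree whenever both exist. -/
theorem stmt_4 {X : Type*} [TopologicalSpace X] [CompactSpace X] [T2Space X]
    (A : Set C(X, ℝ)) (M : ℝ) (hM : ∀ f ∈ A, ‖f‖ ≤ M)
    (hcpt : IsCompact (@closure (WeakSpace ℝ C(X, ℝ)) _ (A : Set (WeakSpace ℝ C(X, ℝ)))))
    (f : ℕ → C(X, ℝ)) (hf : ∀ n, f n ∈ A) (x : ℕ → X)
    (L K : ℕ → ℝ) (ℓ₁ ℓ₂ : ℝ)
    (hL : ∀ n, Tendsto (fun m => f n (x m)) atTop (nhds (L n)))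
    (hℓ₁ : Tendsto L atTop (nhds ℓ₁))
    (hK : ∀ m, Tendsto (fun n => f n (x m)) atTop (nhds (K m)))
    (hℓ₂ : Tendsto K atTop (nhds ℓ₂)) :
    ℓ₁ = ℓ₂ :=
  stmt_4_general A hcpt f hf x L K ℓ₁ ℓ₂ hL hℓ₁ hK hℓ₂
end

section
/- Conversely, if a bounded function φ : M × M → ℝ is unstable — i.e., there exist sequences a_n, b_m such that both iterated limits exist and lim_n lim_m φ(a_n,b_m) ≠ lim_m lim_n φ(a_n,b_m) — then there exist r < s real numbers and subsequences a_{n_k}, b_{m_l} such that φ(a_{n_k}, b_{m_l}) ≤ r whenever k > l and φ(a_{n_k}, b_{m_l}) ≥ s whenever k ≤ l (or with the inequalities reversed): φ has the order property with gap (r,s). -/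
/-!
Say `ℓ₂ < ℓ₁` and pick `ℓ₂ < r < s < ℓ₁`. For all large `n`, `φ (a n) (b m) > s` for all `m`
beyond a threshold depending on `n`; for all large `m`, `φ (a n) (b m) < r` for all `n` beyond a
threshold depending on `m`. Choosing the indices alternately, each beyond the thresholds of all
earlier ones, gives `> s` on and above the diagonal and `< r` below it. The case `ℓ₁ < ℓ₂` is the
same with the roles of `r` and `s` exchanged.
-/

open Filter Set Topology

theorem Filter.Tendsto.eventually_eventually_mem {α β γ : Type*} [TopologicalSpace γ]
    {l₁ : Filter α} {l₂ : Filter β} {f : α → β → γ} {L : α → γ} {ℓ : γ}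
    (hL : Tendsto L l₁ (𝓝 ℓ)) (hf : ∀ n, Tendsto (f n) l₂ (𝓝 (L n)))
    {U : Set γ} (hU : IsOpen U) (hℓ : ℓ ∈ U) :
    ∀ᶠ n in l₁, ∀ᶠ m in l₂, f n m ∈ U :=
  (hL.eventually (hU.mem_nhds hℓ)).mono fun n hn => hf n (hU.mem_nhds hn)

theorem exists_threshold_of_eventually_eventually {P : ℕ → ℕ → Prop}
    (h : ∀ᶠ n in atTop, ∀ᶠ m in atTop, P n m) :
    ∃ N, ∃ t : ℕ → ℕ, ∀ n ≥ N, ∀ m ≥ t n, P n m := by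
  obtain ⟨N, hN⟩ := eventually_atTop.1 h
  have hP : ∀ n, ∀ᶠ m in atTop, N ≤ n → P n m := fun n => by
    by_cases hn : N ≤ n
    · exact (hN n hn).mono fun _ hm _ => hm
    · exact Eventually.of_forall fun _ h => absurd h hn
  choose t ht using fun n => eventually_atTop.1 (hP n)
  exact ⟨N, t, fun n hn m hm => ht n m hm hn⟩

theorem exists_strictMono_interleave_of_threshold {P Q : ℕ → ℕ → Prop} {N₁ N₂ : ℕ}
    {t₁ t₂ : ℕ → ℕ} (hP : ∀ n ≥ N₁, ∀ m ≥ t₁ n, P n m) (hQ : ∀ m ≥ N₂, ∀ n ≥ t₂ m, Q n m) :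
    ∃ nk ml : ℕ → ℕ, StrictMono nk ∧ StrictMono ml ∧
      (∀ k l, k ≤ l → P (nk k) (ml l)) ∧ (∀ k l, l < k → Q (nk k) (ml l)) := by
  let step : ℕ × ℕ → ℕ × ℕ := fun q =>
    (max (q.1 + 1) (t₂ q.2), max (q.2 + 1) (t₁ (max (q.1 + 1) (t₂ q.2))))
  let p : ℕ → ℕ × ℕ := fun k => step^[k] (N₁, max N₂ (t₁ N₁))
  have hp : ∀ k, p (k + 1) = step (p k) := fun k => Function.iterate_succ_apply' ..
  have hn_succ : ∀ k, (p k).1 + 1 ≤ (p (k + 1)).1 ∧ t₂ (p k).2 ≤ (p (k + 1)).1 := fun k => by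
    rw [hp]; exact ⟨le_max_left .., le_max_right ..⟩
  have hm_succ : ∀ k, (p k).2 + 1 ≤ (p (k + 1)).2 := fun k => by
    rw [hp]; exact le_max_left ..
  have hnk : StrictMono fun k => (p k).1 := strictMono_nat_of_lt_succ fun k => (hn_succ k).1
  have hml : StrictMono fun k => (p k).2 := strictMono_nat_of_lt_succ hm_succ
  have hm_t₁ : ∀ k, t₁ (p k).1 ≤ (p k).2
    | 0 => le_max_right ..
    | k + 1 => by rw [hp]; exact le_max_right ..
  have hN₁ : ∀ k, N₁ ≤ (p k).1 := fun k => hnk.monotone (Nat.zero_le k)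
  have hN₂ : ∀ l, N₂ ≤ (p l).2 := fun l =>
    (le_max_left N₂ (t₁ N₁)).trans (hml.monotone (Nat.zero_le l))
  refine ⟨_, _, hnk, hml, fun k l hkl => ?_, fun k l hlk => ?_⟩
  · exact hP _ (hN₁ k) _ ((hm_t₁ k).trans (hml.monotone hkl))
  · exact hQ _ (hN₂ l) _ ((hn_succ l).2.trans (hnk.monotone hlk))

theorem exists_strictMono_interleave {P Q : ℕ → ℕ → Prop}
    (hP : ∀ᶠ n in atTop, ∀ᶠ m in atTop, P n m) (hQ : ∀ᶠ m in atTop, ∀ᶠ n in atTop, Q n m) :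
    ∃ nk ml : ℕ → ℕ, StrictMono nk ∧ StrictMono ml ∧
      (∀ k l, k ≤ l → P (nk k) (ml l)) ∧ (∀ k l, l < k → Q (nk k) (ml l)) := by
  obtain ⟨N₁, t₁, hP⟩ := exists_threshold_of_eventually_eventually hP
  obtain ⟨N₂, t₂, hQ⟩ := exists_threshold_of_eventually_eventually hQ
  exact exists_strictMono_interleave_of_threshold hP hQ

theorem stmt_13_general {M : Type*} (φ : M → M → ℝ)
    (a b : ℕ → M) (L K : ℕ → ℝ) (ℓ₁ ℓ₂ : ℝ)
    (hL : ∀ n, Tendsto (fun m => φ (a n) (b m)) atTop (nhds (L n)))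
    (hℓ₁ : Tendsto L atTop (nhds ℓ₁))
    (hK : ∀ m, Tendsto (fun n => φ (a n) (b m)) atTop (nhds (K m)))
    (hℓ₂ : Tendsto K atTop (nhds ℓ₂))
    (hne : ℓ₁ ≠ ℓ₂) :
    ∃ (r s : ℝ), r < s ∧ ∃ (nk ml : ℕ → ℕ), StrictMono nk ∧ StrictMono ml ∧
      (((∀ k l, l < k → φ (a (nk k)) (b (ml l)) ≤ r) ∧
        (∀ k l, k ≤ l → s ≤ φ (a (nk k)) (b (ml l)))) ∨
       ((∀ k l, l < k → s ≤ φ (a (nk k)) (b (ml l))) ∧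
        (∀ k l, k ≤ l → φ (a (nk k)) (b (ml l)) ≤ r))) := by
  rcases hne.lt_or_gt with h | h
  · obtain ⟨r, hℓ₁r, hrℓ₂⟩ := exists_between h
    obtain ⟨s, hrs, hsℓ₂⟩ := exists_between hrℓ₂
    obtain ⟨nk, ml, hnk, hml, hle, hlt⟩ := exists_strictMono_interleave
      (hℓ₁.eventually_eventually_mem hL isOpen_Iio hℓ₁r)
      (hℓ₂.eventually_eventually_mem hK isOpen_Ioi hsℓ₂)
    exact ⟨r, s, hrs, nk, ml, hnk, hml,
      Or.inr ⟨fun k l h => le_of_lt (hlt k l h), fun k l h => le_of_lt (hle k l h)⟩⟩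
  · obtain ⟨r, hℓ₂r, hrℓ₁⟩ := exists_between h
    obtain ⟨s, hrs, hsℓ₁⟩ := exists_between hrℓ₁
    obtain ⟨nk, ml, hnk, hml, hle, hlt⟩ := exists_strictMono_interleave
      (hℓ₁.eventually_eventually_mem hL isOpen_Ioi hsℓ₁)
      (hℓ₂.eventually_eventually_mem hK isOpen_Iio hℓ₂r)
    exact ⟨r, s, hrs, nk, ml, hnk, hml,
      Or.inl ⟨fun k l h => le_of_lt (hlt k l h), fun k l h => le_of_lt (hle k l h)⟩⟩

/-- An unstable bounded function has the order property with some gap `(r, s)`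
(possibly with the roles of the inequalities reversed). -/
theorem stmt_13 {M : Type*} (φ : M → M → ℝ) (B : ℝ) (hB : ∀ a b, |φ a b| ≤ B)
    (a b : ℕ → M) (L K : ℕ → ℝ) (ℓ₁ ℓ₂ : ℝ)
    (hL : ∀ n, Tendsto (fun m => φ (a n) (b m)) atTop (nhds (L n)))
    (hℓ₁ : Tendsto L atTop (nhds ℓ₁))
    (hK : ∀ m, Tendsto (fun n => φ (a n) (b m)) atTop (nhds (K m)))
    (hℓ₂ : Tendsto K atTop (nhds ℓ₂))
    (hne : ℓ₁ ≠ ℓ₂) :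
    ∃ (r s : ℝ), r < s ∧ ∃ (nk ml : ℕ → ℕ), StrictMono nk ∧ StrictMono ml ∧
      (((∀ k l, l < k → φ (a (nk k)) (b (ml l)) ≤ r) ∧
        (∀ k l, k ≤ l → s ≤ φ (a (nk k)) (b (ml l)))) ∨
       ((∀ k l, l < k → s ≤ φ (a (nk k)) (b (ml l))) ∧
        (∀ k l, k ≤ l → φ (a (nk k)) (b (ml l)) ≤ r))) :=
  stmt_13_general φ a b L K ℓ₁ ℓ₂ hL hℓ₁ hK hℓ₂ hne
end

section
/- Uniform approximation by convex combinations: let E be a real normed space, A ⊆ E, and x an element of the weak closure of A. Then for every ε > 0 there exist n ≥ 1, elements a_1,…,a_n ∈ A and nonnegative reals λ_1,…,λ_n summing to 1 such that ‖x − Σ λ_i a_i‖ < ε. -/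
/-!
The weak topology has the same closed convex sets as the original one (Hahn–Banach), so the weak
closure of `A`, which lies in the weak closure of `convexHull ℝ A`, lies in its norm closure.
Every element of the convex hull is a finite convex combination of points of `A`.
-/

open Set

theorem mem_closure_convexHull_of_mem_weakSpace_closure {E : Type*} [AddCommGroup E]
    [Module ℝ E] [TopologicalSpace E] [IsTopologicalAddGroup E] [ContinuousSMul ℝ E]
    [LocallyConvexSpace ℝ E] {A : Set E} {x : E}
    (hx : x ∈ (@closure (WeakSpace ℝ E) _ (A : Set (WeakSpace ℝ E)) : Set E)) :
    x ∈ closure (convexHull ℝ A) := by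
  have hx' : x ∈ closure (toWeakSpace ℝ E '' convexHull ℝ A) :=
    @closure_mono (WeakSpace ℝ E) _ A _
      (fun _ hy => mem_image_of_mem (toWeakSpace ℝ E) (subset_convexHull ℝ A hy)) x hx
  rw [← (convex_convexHull ℝ A).toWeakSpace_closure ℝ] at hx'
  obtain ⟨y, hy, rfl⟩ := hx'
  exact hy

theorem exists_fin_of_mem_convexHull {R E : Type*} [Field R] [LinearOrder R]
    [IsStrictOrderedRing R] [AddCommGroup E] [Module R E] {s : Set E} {x : E} (hx : x ∈ convexHull R s) :
    ∃ (n : ℕ) (a : Fin n → E) (w : Fin n → R),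
      (∀ i, a i ∈ s) ∧ (∀ i, 0 ≤ w i) ∧ ∑ i, w i = 1 ∧ ∑ i, w i • a i = x := by
  obtain ⟨ι, _, w, a, hw₀, hw₁, ha, rfl⟩ := mem_convexHull_iff_exists_fintype.mp hx
  let e := Fintype.equivFin ι
  exact ⟨Fintype.card ι, a ∘ e.symm, w ∘ e.symm, fun _ => ha _, fun _ => hw₀ _,
    (e.symm.sum_comp w).trans hw₁,
    e.symm.sum_comp fun i => w i • a i⟩

/-- Any point of the weak closure of `A` can be approximated in norm by finite
convex combinations of elements of `A` (restatement of Mazur's Lemma). -/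
theorem stmt_17 {E : Type*} [NormedAddCommGroup E] [NormedSpace ℝ E]
    (A : Set E) (x : E)
    (hx : x ∈ (@closure (WeakSpace ℝ E) _ (A : Set (WeakSpace ℝ E)) : Set E)) :
    ∀ ε > 0, ∃ (n : ℕ), 1 ≤ n ∧ ∃ (a : Fin n → E) (lam : Fin n → ℝ),
      (∀ i, a i ∈ A) ∧ (∀ i, 0 ≤ lam i) ∧ (∑ i, lam i) = 1 ∧
      ‖x - ∑ i, lam i • a i‖ < ε := by
  intro ε hε
  obtain ⟨y, hy, hxy⟩ :=
    Metric.mem_closure_iff.mp (mem_closure_convexHull_of_mem_weakSpace_closure hx) ε hε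
  obtain ⟨n, a, lam, ha, hlam₀, hlam₁, rfl⟩ := exists_fin_of_mem_convexHull hy
  have hn : n ≠ 0 := by
    rintro rfl
    simp at hlam₁
  exact ⟨n, Nat.one_le_iff_ne_zero.mpr hn, a, lam, ha, hlam₀, hlam₁, by rwa [← dist_eq_norm]⟩
end
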